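/- If the input sequence {u_k}_{k=0}^{N−1} is persistently exciting of order n+1, then for every system (A,B,C,D) that is output reachable (i.e., Γ has full row rank p) and every initial state x_0 ∈ ℝ^n, the output sequence {y_k}_{k=0}^{N−1} generated by the system from x_0 under input u is persistently exciting of order 1. -/

import Mathlib

open Matrix Finset

noncomputable def stateSeq {n m : ℕ} (A : Matrix (Fin n) (Fin n) ℝ) (B : Matrix (Fin n) (Fin m) ℝ)
    (x0 : Fin n → ℝ) (u : ℕ → Fin m → ℝ) : ℕ → Fin n → ℝ
  | 0 => x0
  | k + 1 => A.mulVec (stateSeq A B x0 u k) + B.mulVec (u k)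

/-- Output sequence `y_k = C x_k + D u_k` of the LTI system started at `x0` with input `u`. -/
noncomputable def outputSeq {n m p : ℕ} (A : Matrix (Fin n) (Fin n) ℝ) (B : Matrix (Fin n) (Fin m) ℝ)
    (C : Matrix (Fin p) (Fin n) ℝ) (D : Matrix (Fin p) (Fin m) ℝ)
    (x0 : Fin n → ℝ) (u : ℕ → Fin m → ℝ) (k : ℕ) : Fin p → ℝ :=
  C.mulVec (stateSeq A B x0 u k) + D.mulVec (u k)

/-- Markov parameters: `Γ_0 = D`, `Γ_j = C A^(j-1) B` for `j ≥ 1`. -/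
noncomputable def Markov {n m p : ℕ} (A : Matrix (Fin n) (Fin n) ℝ) (B : Matrix (Fin n) (Fin m) ℝ)
    (C : Matrix (Fin p) (Fin n) ℝ) (D : Matrix (Fin p) (Fin m) ℝ) : ℕ → Matrix (Fin p) (Fin m) ℝ
  | 0 => D
  | j + 1 => C * A ^ j * B

/-- The matrix `M = [M_n ⋯ M_1 M_0]` with `M_j = ∑_{q=0}^j d_{j-q} Γ_q`; the block at
block-column `i` (from the left, `i = 0,…,n`) is `M_{n-i}`. -/
noncomputable def Mmat {n m p : ℕ} (A : Matrix (Fin n) (Fin n) ℝ) (B : Matrix (Fin n) (Fin m) ℝ)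
    (C : Matrix (Fin p) (Fin n) ℝ) (D : Matrix (Fin p) (Fin m) ℝ) (d : ℕ → ℝ) :
    Matrix (Fin p) (Fin (n + 1) × Fin m) ℝ :=
  Matrix.of fun i jl =>
    (∑ q ∈ Finset.range ((n - (jl.1 : ℕ)) + 1),
      d ((n - (jl.1 : ℕ)) - q) • Markov A B C D q) i jl.2

/-- The matrix `Γ = [Γ_0 Γ_1 ⋯ Γ_n]`. -/
noncomputable def Gammamat {n m p : ℕ} (A : Matrix (Fin n) (Fin n) ℝ) (B : Matrix (Fin n) (Fin m) ℝ)
    (C : Matrix (Fin p) (Fin n) ℝ) (D : Matrix (Fin p) (Fin m) ℝ) :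
    Matrix (Fin p) (Fin (n + 1) × Fin m) ℝ :=
  Matrix.of fun i jl => Markov A B C D (jl.1 : ℕ) i jl.2

/-! If `v ⬝ᵥ y_k = 0` for all `k < N`, filter the output with the characteristic polynomial
`χ_A = ∑ c_j X^j` of `A`. By Cayley–Hamilton the free response `C A^j x_k` drops out, and
`∑ c_j y_{k+j}` becomes `M u_{[k, k+n]}`, where `M = Mmat` is built from `d_t = c_{n-t}`. So
`v ᵥ* M` annihilates the Hankel matrix `H_{n+1}(u)`, and vanishes by persistency of excitation.
Since `χ_A` is monic, `d_0 = 1` and `M` is block triangular over `Γ` with identity diagonal, so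
`v ᵥ* Γ = 0`, and `v = 0` by output reachability. -/

theorem Matrix.rank_eq_card_iff_vecMul_eq_zero {K ι κ : Type*} [Field K] [Fintype ι]
    [Fintype κ] {M : Matrix ι κ K} : M.rank = Fintype.card ι ↔ ∀ v, v ᵥ* M = 0 → v = 0 := by
  rw [show (∀ v, v ᵥ* M = 0 → v = 0) ↔ Function.Injective M.vecMul from
    (injective_iff_map_eq_zero (vecMulLinear M)).symm, vecMul_injective_iff]
  refine ⟨fun h => linearIndependent_iff_card_eq_finrank_span.mpr ?_, LinearIndependent.rank_matrix⟩
  rw [← h, rank_eq_finrank_span_row, Set.finrank]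

theorem Matrix.sum_charpoly_coeff_smul_pow {R ι : Type*} [CommRing R] [Nontrivial R]
    [Fintype ι] [DecidableEq ι] (M : Matrix ι ι R) :
    ∑ j ∈ range (Fintype.card ι + 1), M.charpoly.coeff j • M ^ j = 0 := by
  simpa [Polynomial.aeval_eq_sum_range, charpoly_natDegree_eq_dim] using aeval_self_charpoly M

section LTI

variable {n m p : ℕ} (A : Matrix (Fin n) (Fin n) ℝ) (B : Matrix (Fin n) (Fin m) ℝ)
  (C : Matrix (Fin p) (Fin n) ℝ) (D : Matrix (Fin p) (Fin m) ℝ) (x0 : Fin n → ℝ)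
  (u : ℕ → Fin m → ℝ)

theorem stateSeq_add (k j : ℕ) :
    stateSeq A B x0 u (k + j) = (A ^ j) *ᵥ stateSeq A B x0 u k
      + ∑ i ∈ range j, (A ^ (j - 1 - i) * B) *ᵥ u (k + i) := by
  induction j with
  | zero => simp
  | succ j ih =>
    rw [← add_assoc, stateSeq, ih, mulVec_add, mulVec_mulVec, ← pow_succ', mulVec_sum,
      sum_range_succ, Nat.add_sub_cancel, Nat.sub_self, pow_zero, Matrix.one_mul, add_assoc]
    congr 2
    refine sum_congr rfl fun i hi => ?_
    rw [mulVec_mulVec, ← Matrix.mul_assoc, ← pow_succ',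
      show j - 1 - i + 1 = j - i by have := mem_range.mp hi; omega]

theorem outputSeq_add (k j : ℕ) :
    outputSeq A B C D x0 u (k + j) = (C * A ^ j) *ᵥ stateSeq A B x0 u k
      + ∑ i ∈ range (j + 1), Markov A B C D (j - i) *ᵥ u (k + i) := by
  rw [outputSeq, stateSeq_add, mulVec_add, mulVec_mulVec, mulVec_sum, sum_range_succ,
    Nat.sub_self, add_assoc]
  congr 2
  refine sum_congr rfl fun i hi => ?_
  rw [mulVec_mulVec, show j - i = j - 1 - i + 1 by have := mem_range.mp hi; omega, Markov,
    Matrix.mul_assoc]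

theorem sum_smul_outputSeq {L : ℕ} (c : ℕ → ℝ) (hc : ∑ j ∈ range L, c j • A ^ j = 0)
    (k : ℕ) :
    ∑ j ∈ range L, c j • outputSeq A B C D x0 u (k + j) =
      ∑ i ∈ range L, (∑ q ∈ range (L - i), c (i + q) • Markov A B C D q) *ᵥ u (k + i) := by
  have hfree : ∑ j ∈ range L, c j • ((C * A ^ j) *ᵥ stateSeq A B x0 u k) = 0 := by
    simp_rw [← smul_mulVec, ← sum_mulVec, ← Matrix.mul_smul, ← Matrix.mul_sum, hc,
      Matrix.mul_zero, zero_mulVec]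
  have hforced : ∀ j ∈ range L, c j • ∑ i ∈ range (j + 1), Markov A B C D (j - i) *ᵥ u (k + i)
      = ∑ i ∈ range (j + 1), (c (i + (j - i)) • Markov A B C D (j - i)) *ᵥ u (k + i) := by
    intro j _
    rw [smul_sum]
    refine sum_congr rfl fun i hi => ?_
    rw [Nat.add_sub_cancel' (Nat.lt_succ_iff.mp (mem_range.mp hi)), smul_mulVec]
  simp_rw [outputSeq_add, smul_add, sum_add_distrib, hfree, zero_add]
  rw [sum_congr rfl hforced,
    sum_range_diag_flip L fun i q => (c (i + q) • Markov A B C D q) *ᵥ u (k + i)]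
  simp_rw [sum_mulVec]

theorem Mmat_reverse_apply (c : ℕ → ℝ) (i : Fin p) (jl : Fin (n + 1) × Fin m) :
    Mmat A B C D (fun t => c (n - t)) i jl =
      (∑ q ∈ range (n + 1 - jl.1), c (jl.1 + q) • Markov A B C D q : Matrix _ _ ℝ) i jl.2 := by
  have hj : (jl.1 : ℕ) ≤ n := Nat.lt_succ_iff.mp jl.1.2
  rw [Mmat, of_apply, ← Nat.sub_add_comm hj]
  refine congrFun (congrFun (sum_congr rfl fun q hq => ?_) i) jl.2
  rw [show n - (n - jl.1 - q) = jl.1 + q by have := mem_range.mp hq; omega]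

theorem Mmat_mul_hankel {K : ℕ} (c : ℕ → ℝ) (hc : ∑ j ∈ range (n + 1), c j • A ^ j = 0)
    (i : Fin p) (k : Fin K) :
    (Mmat A B C D (fun t => c (n - t)) *
        of fun (jl : Fin (n + 1) × Fin m) (k : Fin K) => u ((k : ℕ) + (jl.1 : ℕ)) jl.2) i k =
      (∑ j ∈ range (n + 1), c j • outputSeq A B C D x0 u (k + j)) i := by
  rw [sum_smul_outputSeq A B C D x0 u c hc, mul_apply, Fintype.sum_prod_type, Finset.sum_apply,
    ← Fin.sum_univ_eq_sum_range fun j =>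
      ((∑ q ∈ range (n + 1 - j), c (j + q) • Markov A B C D q) *ᵥ u (k + j)) i]
  simp only [Mmat_reverse_apply, of_apply, mulVec, dotProduct]

theorem vecMul_Mmat_apply (d : ℕ → ℝ) (v : Fin p → ℝ) (j : Fin (n + 1)) (l : Fin m) :
    (v ᵥ* Mmat A B C D d) (j, l) =
      (v ᵥ* ∑ q ∈ range (n - j + 1), d (n - j - q) • Markov A B C D q) l :=
  rfl

theorem vecMul_Markov_eq_zero_of_vecMul_Mmat_eq_zero (d : ℕ → ℝ) (hd : d 0 = 1)
    (v : Fin p → ℝ) (hv : v ᵥ* Mmat A B C D d = 0) (j : ℕ) (hj : j ≤ n) :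
    v ᵥ* Markov A B C D j = 0 := by
  induction j using Nat.strong_induction_on with
  | _ j ih =>
    have hblock : v ᵥ* ∑ q ∈ range (j + 1), d (j - q) • Markov A B C D q = 0 := by
      ext l
      have := vecMul_Mmat_apply A B C D d v ⟨n - j, by omega⟩ l
      rw [hv, show n - (n - j) = j by omega] at this
      exact this.symm
    rwa [sum_range_succ, vecMul_add, Nat.sub_self, hd, one_smul, vecMul_sum,
      sum_eq_zero fun q hq => by
        rw [vecMul_smul, ih q (mem_range.mp hq) (by have := mem_range.mp hq; omega), smul_zero],
      zero_add] at hblock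

end LTI

theorem stmt_5_general {n m p : ℕ}
    (N : ℕ) (hN : n < N) (u : ℕ → Fin m → ℝ)
    (hPE : (Matrix.of fun (il : Fin (n + 1) × Fin m) (k : Fin (N - (n + 1) + 1)) =>
        u ((k : ℕ) + (il.1 : ℕ)) il.2).rank = m * (n + 1)) :
    ∀ (A : Matrix (Fin n) (Fin n) ℝ) (B : Matrix (Fin n) (Fin m) ℝ)
      (C : Matrix (Fin p) (Fin n) ℝ) (D : Matrix (Fin p) (Fin m) ℝ),
      (Gammamat A B C D).rank = p →
      ∀ x0 : Fin n → ℝ,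
        (Matrix.of fun (i : Fin p) (k : Fin N) => outputSeq A B C D x0 u (k : ℕ) i).rank = p := by
  intro A B C D hΓ x0
  have hCH : ∑ j ∈ range (n + 1), A.charpoly.coeff j • A ^ j = 0 := by
    simpa using A.sum_charpoly_coeff_smul_pow
  have hmonic : A.charpoly.coeff n = 1 := by
    simpa using A.charpoly_monic.coeff_natDegree
  have hHankel := rank_eq_card_iff_vecMul_eq_zero.mp (hPE.trans (by simp [mul_comm]))
  have hGamma := rank_eq_card_iff_vecMul_eq_zero.mp (hΓ.trans (Fintype.card_fin p).symm)
  refine (rank_eq_card_iff_vecMul_eq_zero.mpr fun v hv => ?_).trans (Fintype.card_fin p)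
  have hy : ∀ t < N, v ⬝ᵥ outputSeq A B C D x0 u t = 0 := fun t ht => congrFun hv ⟨t, ht⟩
  have hvM : v ᵥ* Mmat A B C D (fun t => A.charpoly.coeff (n - t)) = 0 := by
    refine hHankel _ (funext fun k => ?_)
    rw [vecMul_vecMul]
    change v ⬝ᵥ (fun i => _) = 0
    simp_rw [Mmat_mul_hankel A B C D x0 u _ hCH, dotProduct_sum, dotProduct_smul]
    exact sum_eq_zero fun j hj => by rw [hy _ (by have := mem_range.mp hj; omega), smul_zero]
  exact hGamma v (funext fun jl => congrFun (vecMul_Markov_eq_zero_of_vecMul_Mmat_eq_zero A B C D _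
    (by simpa using hmonic) v hvM jl.1 (Nat.lt_succ_iff.mp jl.1.2)) jl.2)

/-- if `u` is PE of order `n+1`, then for every output reachable system
(`Γ` has full row rank `p`) and every initial state, the output is PE of order 1. -/
theorem stmt_5 {n m p : ℕ} (hn : 0 < n) (hm : 0 < m) (hp : 0 < p)
    (N : ℕ) (hN : n < N) (u : ℕ → Fin m → ℝ)
    (hPE : (Matrix.of fun (il : Fin (n + 1) × Fin m) (k : Fin (N - (n + 1) + 1)) =>
        u ((k : ℕ) + (il.1 : ℕ)) il.2).rank = m * (n + 1)) :
    ∀ (A : Matrix (Fin n) (Fin n) ℝ) (B : Matrix (Fin n) (Fin m) ℝ)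
      (C : Matrix (Fin p) (Fin n) ℝ) (D : Matrix (Fin p) (Fin m) ℝ),
      (Gammamat A B C D).rank = p →
      ∀ x0 : Fin n → ℝ,
        (Matrix.of fun (i : Fin p) (k : Fin N) => outputSeq A B C D x0 u (k : ℕ) i).rank = p :=
  stmt_5_general N hN u hPE
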